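/- Let R be a ring and let 𝒞 be a class of R-modules that is stable under filtered colimits. Then 𝒞 is stable under direct summands: if M ≅ N ⊕ P and M belongs to 𝒞, then N belongs to 𝒞. -/

import Mathlib

/-!
If `X` is a retract of `Y`, with `i : X ⟶ Y`, `r : Y ⟶ X` and `i ≫ r = 𝟙 X`, then `e = r ≫ i`
is an idempotent of `Y`, and `X` is the colimit of the diagram with the single object `Y` and the
morphisms `1, e`. Its index category, the one-object category of the monoid `{1, e}`, is filtered
because `e` is a left zero of that monoid. A direct summand of `M` is a retract of `M`, hence a
filtered colimit of copies of `M`.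
-/

universe u

open CategoryTheory CategoryTheory.Limits

/-- A class of `R`-modules is stable under filtered colimits if, for every
filtered diagram of modules all of whose objects belong to the class, the
colimit (i.e. the point of any colimit cocone) again belongs to the class. -/
def StableUnderFilteredColimits (R : Type u) [Ring R] (S : Set (ModuleCat.{u} R)) : Prop :=
  ∀ (J : Type u) (_ : SmallCategory J) (_ : IsFiltered J)
    (F : J ⥤ ModuleCat.{u} R) (c : Cocone F), IsColimit c →
    (∀ j : J, F.obj j ∈ S) → c.pt ∈ S

namespace CategoryTheory

theorem SingleObj.isFiltered_of_left_absorbing {M : Type*} [Monoid M] (z : M)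
    (hz : ∀ x, z * x = z) : IsFiltered (SingleObj M) where
  cocone_objs _ _ := ⟨SingleObj.star M, 1, 1, trivial⟩
  cocone_maps _ _ f g := ⟨SingleObj.star M, z, by
    rw [SingleObj.comp_as_mul, SingleObj.comp_as_mul, hz, hz]⟩
  nonempty := ⟨SingleObj.star M⟩

theorem IsIdempotentElem.isFiltered_singleObj_powers {M : Type*} [Monoid M] {e : M}
    (he : IsIdempotentElem e) : IsFiltered (SingleObj (Submonoid.powers e)) :=
  SingleObj.isFiltered_of_left_absorbing ⟨e, Submonoid.mem_powers e⟩ fun ⟨_, n, hn⟩ => by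
    ext
    simp only [Submonoid.coe_mul, ← hn, ← pow_succ', he.pow_succ_eq]

namespace Retract

variable {C : Type*} [Category C] {X Y : C} (h : Retract X Y)

abbrev idempotent : End Y := h.r ≫ h.i

theorem isIdempotentElem_idempotent : IsIdempotentElem h.idempotent := by
  simp [IsIdempotentElem, End.mul_def]

theorem comp_r_of_mem_powers {x : End Y} (hx : x ∈ Submonoid.powers h.idempotent) :
    x ≫ h.r = h.r := by
  obtain ⟨_ | n, rfl⟩ := hx
  · exact Category.id_comp h.r
  · simp only [h.isIdempotentElem_idempotent.pow_succ_eq, Category.assoc, retract,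
      Category.comp_id]

def idempotentDiagram : SingleObj (Submonoid.powers h.idempotent) ⥤ C :=
  SingleObj.functor (Submonoid.powers h.idempotent).subtype

def cocone : Cocone h.idempotentDiagram where
  pt := X
  ι.app _ := h.r
  ι.naturality _ _ x := (h.comp_r_of_mem_powers x.2).trans (Category.comp_id _).symm

def isColimitCocone : IsColimit h.cocone where
  desc s := h.i ≫ s.ι.app (SingleObj.star _)
  fac s _ := (Category.assoc _ _ _).symm.trans <|
    s.w (j := SingleObj.star _) (j' := SingleObj.star _) ⟨h.idempotent, Submonoid.mem_powers _⟩
  uniq s m hm := by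
    show m = h.i ≫ s.ι.app (SingleObj.star _)
    rw [← hm]
    exact (h.retract_assoc m).symm

end Retract

end CategoryTheory

def ModuleCat.retractOfLinearEquivProd {R : Type u} [Ring R] {M N P : ModuleCat.{u} R}
    (e : M ≃ₗ[R] (N × P)) : Retract N M where
  i := ModuleCat.ofHom (e.symm.toLinearMap ∘ₗ LinearMap.inl R N P)
  r := ModuleCat.ofHom (LinearMap.fst R N P ∘ₗ e.toLinearMap)
  retract := by ext; simp

theorem StableUnderFilteredColimits.mem_of_isColimit {R : Type u} [Ring R]
    {S : Set (ModuleCat.{u} R)} (hS : StableUnderFilteredColimits R S) {J : Type*} [Category J]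
    [EssentiallySmall.{u} J] [IsFiltered J] {F : J ⥤ ModuleCat.{u} R} {c : Cocone F}
    (hc : IsColimit c) (hF : ∀ j, F.obj j ∈ S) : c.pt ∈ S :=
  hS (SmallModel J) inferInstance (IsFiltered.of_equivalence (equivSmallModel J))
    ((equivSmallModel J).inverse ⋙ F) _ (hc.whiskerEquivalence (equivSmallModel J).symm)
    fun _ => hF _

theorem stableUnderFilteredColimits_stable_under_direct_summands
    (R : Type u) [Ring R] (S : Set (ModuleCat.{u} R))
    (hS : StableUnderFilteredColimits R S)
    (M N P : ModuleCat.{u} R) (e : M ≃ₗ[R] (N × P)) (hM : M ∈ S) :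
    N ∈ S := by
  let h := ModuleCat.retractOfLinearEquivProd e
  have := h.isIdempotentElem_idempotent.isFiltered_singleObj_powers
  exact hS.mem_of_isColimit h.isColimitCocone fun _ => hM
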